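/- If R is a Boolean ring and σ is a ring endomorphism of R, then R[t;σ]/(t²) is left morphic if and only if σ is the identity. -/

import Mathlib

/-- `R[t;σ]/(t²)`, the trivial extension `R ⋉ R(σ)`: pairs `(a, m)` with
multiplication `(a,m)(b,n) = (ab, an + mσ(b))`. -/
def SkewTriv (R : Type*) [Ring R] (σ : R →+* R) : Type _ := R × R

namespace SkewTriv

variable {R : Type*} [Ring R] {σ : R →+* R}

/-- The element `(a, m)` of `SkewTriv R σ`. -/
def mk (σ : R →+* R) (a m : R) : SkewTriv R σ := (a, m)

instance : AddCommGroup (SkewTriv R σ) := inferInstanceAs (AddCommGroup (R × R))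

instance : Mul (SkewTriv R σ) :=
  ⟨fun x y => mk σ (x.1 * y.1) (x.1 * y.2 + x.2 * σ y.1)⟩

instance : One (SkewTriv R σ) := ⟨mk σ 1 0⟩

theorem one_def : (1 : SkewTriv R σ) = mk σ 1 0 := rfl

theorem zero_def : (0 : SkewTriv R σ) = mk σ 0 0 := rfl

theorem mul_def (x y : SkewTriv R σ) :
    x * y = mk σ (x.1 * y.1) (x.1 * y.2 + x.2 * σ y.1) := rfl

theorem add_def (x y : SkewTriv R σ) :
    x + y = mk σ (x.1 + y.1) (x.2 + y.2) := rfl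

instance : Ring (SkewTriv R σ) :=
  { (inferInstance : AddCommGroup (SkewTriv R σ)), (inferInstance : Mul (SkewTriv R σ)),
      (inferInstance : One (SkewTriv R σ)) with
    mul_assoc := by
      intro x y z
      apply Prod.ext
      · show x.1 * y.1 * z.1 = x.1 * (y.1 * z.1)
        exact mul_assoc _ _ _
      · show x.1 * y.1 * z.2 + (x.1 * y.2 + x.2 * σ y.1) * σ z.1 =
          x.1 * (y.1 * z.2 + y.2 * σ z.1) + x.2 * σ (y.1 * z.1)
        simp only [mul_add, add_mul, map_mul, mul_assoc]
        abel
    one_mul := by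
      intro x
      apply Prod.ext
      · show 1 * x.1 = x.1
        simp
      · show 1 * x.2 + 0 * σ x.1 = x.2
        simp
    mul_one := by
      intro x
      apply Prod.ext
      · show x.1 * 1 = x.1
        simp
      · show x.1 * 0 + x.2 * σ 1 = x.2
        simp
    left_distrib := by
      intro x y z
      apply Prod.ext
      · show x.1 * (y.1 + z.1) = x.1 * y.1 + x.1 * z.1
        exact mul_add _ _ _
      · show x.1 * (y.2 + z.2) + x.2 * σ (y.1 + z.1) =
          (x.1 * y.2 + x.2 * σ y.1) + (x.1 * z.2 + x.2 * σ z.1)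
        simp only [mul_add, map_add]
        abel
    right_distrib := by
      intro x y z
      apply Prod.ext
      · show (x.1 + y.1) * z.1 = x.1 * z.1 + y.1 * z.1
        exact add_mul _ _ _
      · show (x.1 + y.1) * z.2 + (x.2 + y.2) * σ z.1 =
          (x.1 * z.2 + x.2 * σ z.1) + (y.1 * z.2 + y.2 * σ z.1)
        simp only [add_mul]
        abel
    zero_mul := by
      intro x
      apply Prod.ext
      · show 0 * x.1 = 0
        simp
      · show 0 * x.2 + 0 * σ x.1 = 0
        simp
    mul_zero := by
      intro x
      apply Prod.ext
      · show x.1 * 0 = 0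
        simp
      · show x.1 * 0 + x.2 * σ 0 = 0
        simp }

end SkewTriv

/-- A ring `S` is left morphic if every element `x` admits `y` with
`ann_l(x) = Sy` and `ann_l(y) = Sx`. -/
def IsLeftMorphicRing (S : Type*) [Ring S] : Prop :=
  ∀ x : S, ∃ y : S, ({z : S | z * x = 0} = {z : S | ∃ w, z = w * y}) ∧
    ({z : S | z * y = 0} = {z : S | ∃ w, z = w * x})

/-!
For `e ∈ R` the left annihilator of `(0, e)` is `{(c, k) | c e = 0}`, so a generator `y` of it has
first coordinate `1 + e`. Writing `(0, 1)` as a multiple of `y = (1 + e, n)` forces `σ e ≤ e` in the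
Boolean order. With `c = e (1 + σ e)`, the element `(c, c n)` annihilates `y` on the left, hence is
a multiple of `(0, e)`; so `c = 0`, i.e. `e ≤ σ e`. Conversely, for `σ = id` the element `(a, m)` is
paired with `(1 + (a ∨ m), m (1 + a))`, where `a ∨ m = a + m + a m`.
-/

theorem setOf_mul_eq_zero_eq_iff {S : Type*} [MonoidWithZero S] (x y : S) :
    {z : S | z * x = 0} = {z | ∃ w, z = w * y} ↔
      y * x = 0 ∧ ∀ z, z * x = 0 → ∃ w, z = w * y := by
  refine ⟨fun h => ⟨h.superset ⟨1, (one_mul y).symm⟩, fun z hz => h.subset hz⟩,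
    fun ⟨hyx, h⟩ => Set.ext fun z => ⟨h z, ?_⟩⟩
  rintro ⟨w, rfl⟩
  simp only [Set.mem_ofPred_eq, mul_assoc, hyx, mul_zero]

theorem isLeftMorphicRing_iff {S : Type*} [Ring S] :
    IsLeftMorphicRing S ↔ ∀ x : S, ∃ y : S, y * x = 0 ∧ x * y = 0 ∧
      (∀ z, z * x = 0 → ∃ w, z = w * y) ∧ (∀ z, z * y = 0 → ∃ w, z = w * x) := by
  simp only [IsLeftMorphicRing, setOf_mul_eq_zero_eq_iff]
  exact forall_congr' fun x => exists_congr fun y => by tauto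

namespace SkewTriv

variable {R : Type*}

section Ring

variable [Ring R] {σ : R →+* R}

@[simp]
theorem mk_mul_mk (a m b n : R) : mk σ a m * mk σ b n = mk σ (a * b) (a * n + m * σ b) := rfl

@[simp]
theorem mk_eq_mk_iff {a m b n : R} : mk σ a m = mk σ b n ↔ a = b ∧ m = n := Prod.ext_iff

@[simp]
theorem mk_eq_zero_iff {a m : R} : mk σ a m = 0 ↔ a = 0 ∧ m = 0 := Prod.ext_iff

theorem exists_eq_mk (x : SkewTriv R σ) : ∃ a m, x = mk σ a m := ⟨x.1, x.2, rfl⟩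

end Ring

section BooleanRing

variable [BooleanRing R] {σ : R →+* R}

theorem eq_one_add_of_leftAnnihilator {e b n : R} (hyx : mk σ b n * mk σ 0 e = 0)
    (h : ∀ z, z * mk σ 0 e = 0 → ∃ w, z = w * mk σ b n) : b = 1 + e := by
  have hbe : b * e = 0 := by simpa using hyx
  obtain ⟨w, hw⟩ := h (mk σ (1 + e) 0) (by
    simp only [mk_mul_mk, mk_eq_zero_iff]
    grind [BooleanRing.mul_self e, BooleanRing.add_self (1 : R)])
  obtain ⟨c, k, rfl⟩ := exists_eq_mk w
  simp only [mk_mul_mk, mk_eq_mk_iff] at hw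
  grind [BooleanRing.mul_self b, BooleanRing.add_self (1 : R)]

theorem map_eq_mul_map_of_leftAnnihilator {e n : R}
    (h : ∀ z, z * mk σ 0 e = 0 → ∃ w, z = w * mk σ (1 + e) n) : σ e = e * σ e := by
  obtain ⟨w, hw⟩ := h (mk σ 0 1) (by simp)
  obtain ⟨c, k, rfl⟩ := exists_eq_mk w
  simp only [mk_mul_mk, mk_eq_mk_iff, map_add, map_one] at hw
  grind [BooleanRing.mul_self (σ e), BooleanRing.add_self (1 : R)]

theorem eq_mul_map_of_leftAnnihilator {e n : R}
    (h : ∀ z, z * mk σ (1 + e) n = 0 → ∃ w, z = w * mk σ 0 e) : e = e * σ e := by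
  set c := e * (1 + σ e)
  obtain ⟨w, hw⟩ := h (mk σ c (c * n)) (by
    simp only [mk_mul_mk, mk_eq_zero_iff, map_add, map_one, c]
    grind [BooleanRing.mul_self e, BooleanRing.mul_self (σ e), BooleanRing.add_self (1 : R)])
  obtain ⟨a, k, rfl⟩ := exists_eq_mk w
  simp only [mk_mul_mk, mk_eq_mk_iff, mul_zero, c] at hw
  grind [BooleanRing.add_self (1 : R)]

theorem eq_id_of_isLeftMorphicRing (H : IsLeftMorphicRing (SkewTriv R σ)) : σ = RingHom.id R := by
  ext e
  obtain ⟨y, hyx, -, h₁, h₂⟩ := isLeftMorphicRing_iff.1 H (mk σ 0 e)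
  obtain ⟨b, n, rfl⟩ := exists_eq_mk y
  obtain rfl := eq_one_add_of_leftAnnihilator hyx h₁
  exact (map_eq_mul_map_of_leftAnnihilator h₁).trans (eq_mul_map_of_leftAnnihilator h₂).symm

theorem isLeftMorphicRing_id : IsLeftMorphicRing (SkewTriv R (RingHom.id R)) := by
  have h₂ := BooleanRing.add_self (1 : R)
  refine isLeftMorphicRing_iff.2 fun x => ?_
  obtain ⟨a, m, rfl⟩ := exists_eq_mk x
  have ha := BooleanRing.mul_self a
  have hm := BooleanRing.mul_self m
  refine ⟨mk _ (1 + (a + m + a * m)) (m + a * m), ?_, ?_, fun z hz => ?_, fun z hz => ?_⟩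
  · simp only [mk_mul_mk, mk_eq_zero_iff, RingHom.id_apply]
    grind
  · simp only [mk_mul_mk, mk_eq_zero_iff, RingHom.id_apply]
    grind
  · obtain ⟨c, k, rfl⟩ := exists_eq_mk z
    simp only [mk_mul_mk, mk_eq_zero_iff, RingHom.id_apply] at hz
    have hka : k * a = 0 := by grind
    have hcm : c * m = 0 := by grind
    refine ⟨mk _ (c + k * (a + m + a * m)) k, ?_⟩
    simp only [mk_mul_mk, mk_eq_mk_iff, RingHom.id_apply]
    grind
  · obtain ⟨c, k, rfl⟩ := exists_eq_mk z
    simp only [mk_mul_mk, mk_eq_zero_iff, RingHom.id_apply] at hz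
    have hk : k * (a + m + a * m) = k := by grind
    have hc : c * a = c := by grind
    refine ⟨mk _ (c + k + k * a) (k + c * m), ?_⟩
    simp only [mk_mul_mk, mk_eq_mk_iff, RingHom.id_apply]
    grind

end BooleanRing

end SkewTriv

/-- If `R` is a Boolean ring and `σ` is a ring endomorphism of `R`, then
`R[t;σ]/(t²)` is left morphic if and only if `σ` is the identity. -/
theorem stmt11 {R : Type*} [BooleanRing R] (σ : R →+* R) :
    IsLeftMorphicRing (SkewTriv R σ) ↔ σ = RingHom.id R := by
  refine ⟨SkewTriv.eq_id_of_isLeftMorphicRing, ?_⟩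
  rintro rfl
  exact SkewTriv.isLeftMorphicRing_id
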